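/- Let K, L ∈ End*_𝒜(H) and let {Λᵢ}_{i∈I} be a ∗-K-g-frame for H with bounds A, B ∈ 𝒜. Then for every natural number n, the family {Λᵢ ∘ (L*)ⁿ}_{i∈I} is a ∗-(LⁿK)-g-frame for H, with bounds A and ‖L‖ⁿ·B. -/

import Mathlib

/-!
Summability and the lower bound are the hypotheses on `{Λ i}` evaluated at `(L*)ⁿ f`. The upper
bound reduces to `⟪(L*)ⁿ f, (L*)ⁿ f⟫ ≤ ‖L‖²ⁿ ⟪f, f⟫`, an instance of Paschke's inequality
`⟪T x, T x⟫ ≤ C² ⟪x, x⟫` for an `A`-linear map `T` with `‖T x‖ ≤ C ‖x‖`: here `T = (L*)ⁿ` is the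
adjoint of `Lⁿ`, hence `A`-linear, and `‖T y‖ ≤ ‖Lⁿ‖ ‖y‖` by the Cauchy–Schwarz inequality.
-/

open scoped RightActions

/-- The `CStarModule` class as it stood in Mathlib of December 2024 (right action of `Aᵐᵒᵖ`,
inner product `A`-linear on the right in its second argument). -/
class CStarModuleOld (A E : Type*) [NonUnitalSemiring A] [StarRing A]
    [Module ℂ A] [AddCommGroup E] [Module ℂ E] [PartialOrder A] [SMul Aᵐᵒᵖ E] [Norm A] [Norm E]
    extends Inner A E where
  inner_add_right {x} {y} {z} : inner x (y + z) = inner x y + inner x z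
  inner_self_nonneg {x} : 0 ≤ inner x x
  inner_self {x} : inner x x = 0 ↔ x = 0
  inner_op_smul_right {a : A} {x y : E} : inner x (y <• a) = inner x y * a
  inner_smul_right_complex {z : ℂ} {x} {y} : inner x (z • y) = z • inner x y
  star_inner x y : star (inner x y) = inner y x
  norm_eq_sqrt_norm_inner_self x : ‖x‖ = √‖inner x x‖

open MulOpposite Filter Topology

lemma le_of_forall_pos_le_add_smul {M : Type*} [AddCommGroup M] [Module ℝ M]
    [TopologicalSpace M] [ContinuousAdd M] [ContinuousSMul ℝ M] [Preorder M]
    [ClosedIciTopology M] {a b : M} (u : M) (h : ∀ ε : ℝ, 0 < ε → a ≤ b + ε • u) : a ≤ b := by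
  have hlim : Tendsto (fun ε : ℝ => b + ε • u) (𝓝[>] 0) (𝓝 b) := by
    have : Continuous fun ε : ℝ => b + ε • u := by fun_prop
    simpa using this.continuousWithinAt.tendsto (x := 0) (s := Set.Ioi 0)
  exact ge_of_tendsto hlim (eventually_nhdsWithin_of_forall h)

section CStarAlgebra

variable {A : Type*} [CStarAlgebra A] [PartialOrder A] [StarOrderedRing A]

lemma le_smul_of_conjugate_rpow_le_algebraMap {c d : A} (hd : IsStrictlyPositive d) {r : ℝ}
    (h : d ^ (-(1 / 2) : ℝ) * c * d ^ (-(1 / 2) : ℝ) ≤ algebraMap ℝ A r) : c ≤ r • d := by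
  set p := d ^ (-(1 / 2) : ℝ)
  have hqp : CFC.sqrt d * p = 1 := by rw [CFC.sqrt_eq_rpow]; exact CFC.rpow_mul_rpow_neg _ hd
  have hpq : p * CFC.sqrt d = 1 := by rw [CFC.sqrt_eq_rpow]; exact CFC.rpow_neg_mul_rpow _ hd
  calc c = (CFC.sqrt d * p) * c * (p * CFC.sqrt d) := by rw [hqp, hpq, one_mul, mul_one]
    _ = CFC.sqrt d * (p * c * p) * CFC.sqrt d := by noncomm_ring
    _ ≤ CFC.sqrt d * algebraMap ℝ A r * CFC.sqrt d :=
      (IsSelfAdjoint.of_nonneg (CFC.sqrt_nonneg d)).conjugate_le_conjugate h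
    _ = r • d := by
      rw [← Algebra.commutes, mul_assoc, CFC.sqrt_mul_sqrt_self d hd.nonneg, Algebra.smul_def]

end CStarAlgebra

namespace CStarModuleOld

variable {A : Type*} [CStarAlgebra A] [PartialOrder A]
  {E : Type*} [NormedAddCommGroup E] [NormedSpace ℂ E] [SMul Aᵐᵒᵖ E] [CStarModuleOld A E]

instance toCStarModuleMulOpposite : CStarModule Aᵐᵒᵖ E where
  inner x y := op (inner A x y)
  inner_add_right := congrArg op inner_add_right
  inner_self_nonneg := op_nonneg.mpr inner_self_nonneg
  inner_self := op_eq_zero_iff _ |>.trans inner_self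
  inner_op_smul_right {a} := by rw [← op_unop a]; exact congrArg op inner_op_smul_right
  inner_smul_right_complex := congrArg op inner_smul_right_complex
  star_inner x y := congrArg op (star_inner x y)
  norm_eq_sqrt_norm_inner_self x := norm_eq_sqrt_norm_inner_self x

lemma inner_sub_left (x y z : E) : inner A (x - y) z = inner A x z - inner A y z :=
  op_injective <| by rw [op_sub]; exact CStarModule.inner_sub_left (A := Aᵐᵒᵖ) (x := x)

lemma inner_op_smul_left (x y : E) (a : A) : inner A (x <• a) y = star a * inner A x y := by
  rw [← star_inner y, inner_op_smul_right, star_mul, star_inner]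

lemma norm_sq_eq (x : E) : ‖x‖ ^ 2 = ‖inner A x x‖ := by
  rw [norm_eq_sqrt_norm_inner_self (A := A) x, Real.sq_sqrt (norm_nonneg _)]

lemma inner_op_smul_self (x : E) (a : A) :
    inner A (x <• a) (x <• a) = star a * inner A x x * a := by
  rw [inner_op_smul_left, inner_op_smul_right, mul_assoc]

lemma ext_inner_left {x y : E} (h : ∀ z, inner A x z = inner A y z) : x = y := by
  rw [← sub_eq_zero, ← inner_self (A := A), inner_sub_left, h, sub_self]

variable [StarOrderedRing A]

lemma norm_inner_le (x y : E) : ‖inner A x y‖ ≤ ‖x‖ * ‖y‖ :=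
  CStarModule.norm_inner_le (A := Aᵐᵒᵖ) E

lemma inner_self_le_algebraMap_norm_sq (x : E) : inner A x x ≤ algebraMap ℝ A (‖x‖ ^ 2) := by
  rw [norm_sq_eq (A := A)]
  exact IsSelfAdjoint.le_algebraMap_norm_self (star_inner (A := A) x x)

lemma norm_le_one_of_inner_self_le_one {x : E} (h : inner A x x ≤ 1) : ‖x‖ ≤ 1 := by
  rw [← sq_le_one_iff₀ (norm_nonneg x), norm_sq_eq (A := A)]
  exact (CStarAlgebra.norm_le_one_iff_of_nonneg _ inner_self_nonneg).mpr h

lemma norm_op_smul_rpow_neg_one_half_le_one {x : E} {d : A} (hd : IsStrictlyPositive d)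
    (hxd : inner A x x ≤ d) : ‖x <• d ^ (-(1 / 2) : ℝ)‖ ≤ 1 := by
  refine norm_le_one_of_inner_self_le_one (A := A) ?_
  rw [inner_op_smul_self, (IsSelfAdjoint.of_nonneg CFC.rpow_nonneg).star_eq,
    ← CFC.conjugate_rpow_neg_one_half d hd]
  exact (IsSelfAdjoint.of_nonneg CFC.rpow_nonneg).conjugate_le_conjugate hxd

variable {F : Type*} [NormedAddCommGroup F] [NormedSpace ℂ F] [SMul Aᵐᵒᵖ F] [CStarModuleOld A F]

/-- Test the norm bound on `x ⬝ (⟪x, x⟫ + ε)^(-1/2)`, a vector of norm at most `1`,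
and let `ε → 0`. -/
theorem inner_self_apply_le_of_norm_apply_le (T : E → F) (C : ℝ)
    (hT : ∀ x (a : A), T (x <• a) = T x <• a) (hC : ∀ x, ‖T x‖ ≤ C * ‖x‖) (x : E) :
    inner A (T x) (T x) ≤ C ^ 2 • inner A x x := by
  refine le_of_forall_pos_le_add_smul (C ^ 2 • (1 : A)) fun ε hε => ?_
  set d := inner A x x + algebraMap ℝ A ε
  have hd : IsStrictlyPositive d :=
    (isStrictlyPositive_algebraMap (A := A) hε).nonneg_add inner_self_nonneg
  set p := d ^ (-(1 / 2) : ℝ)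
  have hx : ‖x <• p‖ ≤ 1 :=
    norm_op_smul_rpow_neg_one_half_le_one hd (le_add_of_nonneg_right (algebraMap_nonneg _ hε.le))
  have hTx : ‖T (x <• p)‖ ^ 2 ≤ C ^ 2 :=
    calc ‖T (x <• p)‖ ^ 2 ≤ (C * ‖x <• p‖) ^ 2 := pow_le_pow_left₀ (norm_nonneg _) (hC _) 2
      _ = C ^ 2 * ‖x <• p‖ ^ 2 := mul_pow _ _ _
      _ ≤ C ^ 2 := mul_le_of_le_one_right (sq_nonneg C) (pow_le_one₀ (norm_nonneg _) hx)
  have hconj : p * inner A (T x) (T x) * p ≤ algebraMap ℝ A (C ^ 2) :=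
    calc p * inner A (T x) (T x) * p = inner A (T (x <• p)) (T (x <• p)) := by
          rw [hT, inner_op_smul_self, (IsSelfAdjoint.of_nonneg CFC.rpow_nonneg).star_eq]
      _ ≤ algebraMap ℝ A (‖T (x <• p)‖ ^ 2) := inner_self_le_algebraMap_norm_sq _
      _ ≤ algebraMap ℝ A (C ^ 2) := algebraMap_mono A hTx
  calc inner A (T x) (T x) ≤ C ^ 2 • d := le_smul_of_conjugate_rpow_le_algebraMap hd hconj
    _ = C ^ 2 • inner A x x + ε • C ^ 2 • (1 : A) := by
      rw [smul_add, Algebra.algebraMap_eq_smul_one, smul_comm]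

end CStarModuleOld

section Adjoint

open CStarModuleOld

variable {A : Type*} [CStarAlgebra A] [PartialOrder A]
  {E : Type*} [NormedAddCommGroup E] [NormedSpace ℂ E] [SMul Aᵐᵒᵖ E] [CStarModuleOld A E]
  {F : Type*} [NormedAddCommGroup F] [NormedSpace ℂ F] [SMul Aᵐᵒᵖ F] [CStarModuleOld A F]

lemma inner_apply_left_of_adjoint {L : E → F} {Ladj : F → E}
    (hL : ∀ x y, inner A (L x) y = inner A x (Ladj y)) (y : F) (x : E) :
    inner A (Ladj y) x = inner A y (L x) := by
  rw [← star_inner (A := A) (L x), hL, star_inner]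

lemma map_op_smul_of_adjoint {L : E → F} {Ladj : F → E}
    (hL : ∀ x y, inner A (L x) y = inner A x (Ladj y)) (y : F) (a : A) :
    Ladj (y <• a) = Ladj y <• a :=
  ext_inner_left fun x => by
    rw [inner_apply_left_of_adjoint hL, inner_op_smul_left, inner_op_smul_left,
      inner_apply_left_of_adjoint hL]

lemma norm_apply_le_of_adjoint [StarOrderedRing A] {L : E →L[ℂ] F} {Ladj : F → E}
    (hL : ∀ x y, inner A (L x) y = inner A x (Ladj y)) (y : F) :
    ‖Ladj y‖ ≤ ‖L‖ * ‖y‖ := by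
  have hsq : ‖Ladj y‖ * ‖Ladj y‖ ≤ ‖L‖ * ‖y‖ * ‖Ladj y‖ :=
    calc ‖Ladj y‖ * ‖Ladj y‖ = ‖inner A y (L (Ladj y))‖ := by
          rw [← sq, norm_sq_eq (A := A), inner_apply_left_of_adjoint hL]
      _ ≤ ‖y‖ * ‖L (Ladj y)‖ := norm_inner_le y _
      _ ≤ ‖y‖ * (‖L‖ * ‖Ladj y‖) := by gcongr; exact L.le_opNorm _
      _ = ‖L‖ * ‖y‖ * ‖Ladj y‖ := by ring
  rcases (norm_nonneg (Ladj y)).eq_or_lt with h0 | hpos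
  · rw [← h0]; positivity
  · exact le_of_mul_le_mul_right hsq hpos

lemma inner_pow_apply_of_adjoint {L Ladj : E →L[ℂ] E}
    (hL : ∀ x y, inner A (L x) y = inner A x (Ladj y)) (n : ℕ) (x y : E) :
    inner A ((L ^ n) x) y = inner A x ((Ladj ^ n) y) := by
  induction n generalizing x y with
  | zero => rfl
  | succ n ih => rw [pow_succ, pow_succ']; exact (ih (L x) y).trans (hL x _)

lemma inner_self_adjoint_pow_apply_le [StarOrderedRing A] {L Ladj : E →L[ℂ] E}
    (hL : ∀ x y, inner A (L x) y = inner A x (Ladj y)) (n : ℕ) (x : E) :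
    inner A ((Ladj ^ n) x) ((Ladj ^ n) x) ≤ (‖L‖ ^ n) ^ 2 • inner A x x := by
  have hLn := inner_pow_apply_of_adjoint hL n
  have hnorm : ‖L ^ n‖ ≤ ‖L‖ ^ n := by
    rcases n.eq_zero_or_pos with rfl | hn
    · rw [pow_zero, pow_zero]; exact ContinuousLinearMap.norm_id_le
    · exact norm_pow_le' L hn
  refine inner_self_apply_le_of_norm_apply_le _ _ (map_op_smul_of_adjoint hLn) (fun y => ?_) x
  exact (norm_apply_le_of_adjoint hLn y).trans (by gcongr)

end Adjoint

theorem star_LnK_g_frame_comp_adjoint_pow_general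
    {𝓐 : Type*} [CStarAlgebra 𝓐] [PartialOrder 𝓐] [StarOrderedRing 𝓐]
    {I : Type*}
    {H : Type*} [NormedAddCommGroup H] [NormedSpace ℂ H] [SMul 𝓐ᵐᵒᵖ H]
    [CStarModuleOld 𝓐 H]
    {Hi : I → Type*} [∀ i, NormedAddCommGroup (Hi i)] [∀ i, NormedSpace ℂ (Hi i)]
    [∀ i, SMul 𝓐ᵐᵒᵖ (Hi i)] [∀ i, CStarModuleOld 𝓐 (Hi i)]
    -- `K` and `L` are adjointable operators on `H` with adjoints `Kadj`, `Ladj`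
    (Kadj L Ladj : H →L[ℂ] H)
    (hL : ∀ x y : H, (inner 𝓐 (L x) y : 𝓐) = inner 𝓐 x (Ladj y))
    -- the family `Λ i ∈ End*(H, Hi i)` of adjointable operators
    (Λ : ∀ i, H →L[ℂ] Hi i)
    -- `{Λ i}` is a `∗`-`K`-`g`-frame with bounds `a`, `b`
    (a b : 𝓐)
    (hsum : ∀ x : H, Summable fun i => (inner 𝓐 (Λ i x) (Λ i x) : 𝓐))
    (hlow : ∀ x : H,
      a * (inner 𝓐 (Kadj x) (Kadj x) : 𝓐) * star a ≤ ∑' i, (inner 𝓐 (Λ i x) (Λ i x) : 𝓐))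
    (hup : ∀ x : H, ∑' i, (inner 𝓐 (Λ i x) (Λ i x) : 𝓐) ≤ b * (inner 𝓐 x x : 𝓐) * star b) :
    -- for every `n`, `{Λ i ∘ (L*)ⁿ}` is a `∗`-`(LⁿK)`-`g`-frame with bounds `a`, `‖L‖ⁿ·b`
    ∀ n : ℕ,
      (∀ f : H, Summable fun i =>
        (inner 𝓐 (Λ i ((Ladj ^ n) f)) (Λ i ((Ladj ^ n) f)) : 𝓐)) ∧
      ∀ f : H,
        a * (inner 𝓐 (Kadj ((Ladj ^ n) f)) (Kadj ((Ladj ^ n) f)) : 𝓐) * star a ≤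
            ∑' i, (inner 𝓐 (Λ i ((Ladj ^ n) f)) (Λ i ((Ladj ^ n) f)) : 𝓐) ∧
        ∑' i, (inner 𝓐 (Λ i ((Ladj ^ n) f)) (Λ i ((Ladj ^ n) f)) : 𝓐) ≤
            (‖L‖ ^ n) ^ 2 • (b * (inner 𝓐 f f : 𝓐) * star b) := by
  intro n
  refine ⟨fun f => hsum _, fun f => ⟨hlow _, ?_⟩⟩
  calc ∑' i, (inner 𝓐 (Λ i ((Ladj ^ n) f)) (Λ i ((Ladj ^ n) f)) : 𝓐)
      ≤ b * inner 𝓐 ((Ladj ^ n) f) ((Ladj ^ n) f) * star b := hup _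
    _ ≤ b * ((‖L‖ ^ n) ^ 2 • inner 𝓐 f f) * star b :=
      star_right_conjugate_le_conjugate (inner_self_adjoint_pow_apply_le hL n f) b
    _ = (‖L‖ ^ n) ^ 2 • (b * inner 𝓐 f f * star b) := by rw [mul_smul_comm, smul_mul_assoc]

/-- If `{Λ i}` is a `∗`-`K`-`g`-frame with bounds `a, b` and
`L ∈ End*(H)`, then for every `n : ℕ` the family `{Λ i ∘ (L*)ⁿ}` is a `∗`-`(LⁿK)`-`g`-frame
with bounds `a` and `‖L‖ⁿ·b`. -/
theorem star_LnK_g_frame_comp_adjoint_pow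
    {𝓐 : Type*} [CStarAlgebra 𝓐] [PartialOrder 𝓐] [StarOrderedRing 𝓐]
    {I : Type*} [Countable I]
    {H : Type*} [NormedAddCommGroup H] [NormedSpace ℂ H] [SMul 𝓐ᵐᵒᵖ H]
    [CStarModuleOld 𝓐 H] [CompleteSpace H]
    {Hi : I → Type*} [∀ i, NormedAddCommGroup (Hi i)] [∀ i, NormedSpace ℂ (Hi i)]
    [∀ i, SMul 𝓐ᵐᵒᵖ (Hi i)] [∀ i, CStarModuleOld 𝓐 (Hi i)] [∀ i, CompleteSpace (Hi i)]
    -- `K` and `L` are adjointable operators on `H` with adjoints `Kadj`, `Ladj`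
    (K Kadj L Ladj : H →L[ℂ] H)
    (hK : ∀ x y : H, (inner 𝓐 (K x) y : 𝓐) = inner 𝓐 x (Kadj y))
    (hL : ∀ x y : H, (inner 𝓐 (L x) y : 𝓐) = inner 𝓐 x (Ladj y))
    -- the family `Λ i ∈ End*(H, Hi i)` of adjointable operators
    (Λ : ∀ i, H →L[ℂ] Hi i) (Λadj : ∀ i, Hi i →L[ℂ] H)
    (hΛ : ∀ i (x : H) (y : Hi i), (inner 𝓐 (Λ i x) y : 𝓐) = inner 𝓐 x (Λadj i y))
    -- `{Λ i}` is a `∗`-`K`-`g`-frame with bounds `a`, `b`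
    (a b : 𝓐) (ha : a ≠ 0) (hb : b ≠ 0)
    (hsum : ∀ x : H, Summable fun i => (inner 𝓐 (Λ i x) (Λ i x) : 𝓐))
    (hlow : ∀ x : H,
      a * (inner 𝓐 (Kadj x) (Kadj x) : 𝓐) * star a ≤ ∑' i, (inner 𝓐 (Λ i x) (Λ i x) : 𝓐))
    (hup : ∀ x : H, ∑' i, (inner 𝓐 (Λ i x) (Λ i x) : 𝓐) ≤ b * (inner 𝓐 x x : 𝓐) * star b) :
    -- for every `n`, `{Λ i ∘ (L*)ⁿ}` is a `∗`-`(LⁿK)`-`g`-frame with bounds `a`, `‖L‖ⁿ·b`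
    ∀ n : ℕ,
      (∀ f : H, Summable fun i =>
        (inner 𝓐 (Λ i ((Ladj ^ n) f)) (Λ i ((Ladj ^ n) f)) : 𝓐)) ∧
      ∀ f : H,
        a * (inner 𝓐 (Kadj ((Ladj ^ n) f)) (Kadj ((Ladj ^ n) f)) : 𝓐) * star a ≤
            ∑' i, (inner 𝓐 (Λ i ((Ladj ^ n) f)) (Λ i ((Ladj ^ n) f)) : 𝓐) ∧
        ∑' i, (inner 𝓐 (Λ i ((Ladj ^ n) f)) (Λ i ((Ladj ^ n) f)) : 𝓐) ≤
            (‖L‖ ^ n) ^ 2 • (b * (inner 𝓐 f f : 𝓐) * star b) :=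
  star_LnK_g_frame_comp_adjoint_pow_general Kadj L Ladj hL Λ a b hsum hlow hup
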